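/- arXiv:1810.02535 — 7 statements merged into one kernel-verified Lean document; each statement's English description precedes it below -/
import Mathlib

section
/- Let L ≥ 1 be an integer and let λ_sd, λ_sr, λ_sp, ψ, ξ > 0. Let X ~ Exp(λ_sd), Z ~ Gamma(shape L, rate λ_sr), and Y ~ Exp(λ_sp) be mutually independent. Then P[X ≥ ψ·Y and Z ≥ (ψ/ξ)·Y] = (1/(1 + λ_sd ψ/λ_sp))·(1 − (1 + λ_sd ξ/λ_sr + λ_sp ξ/(λ_sr ψ))^{−L}). (This is the paper's exact evaluation of p₃ = Pr[P_s|h_sd|²/N_o ≥ γ_th, ξP_s‖h_sr‖²/N_o ≥ γ_th].) -/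
/-!
Conditionally on `Z = z`, the event is `Y ≤ ξ z / ψ, X ≥ ψ Y`. Integrating the exponential tail
`e^{-λ_sd ψ y}` of `X` against the law of `Y` gives `k (1 - e^{-b z})` with
`k = λ_sp / (λ_sp + λ_sd ψ)` and `b = (λ_sp + λ_sd ψ) ξ / ψ`, and averaging over `Z` uses the
Laplace transform `E[e^{-b Z}] = (λ_sr / (λ_sr + b))^L`. Both integrals come from exponential
tilting: `e^{-s y} · Gamma(a, r) = (r / (r + s))^a · Gamma(a, r + s)`.
-/

open MeasureTheory ProbabilityTheory Real
open Set

lemma gammaPDFReal_mul_exp_neg_mul {a r s : ℝ} (hr : 0 ≤ r) (hrs : 0 < r + s) (y : ℝ) :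
    gammaPDFReal a r y * exp (-(s * y)) = (r / (r + s)) ^ a * gammaPDFReal a (r + s) y := by
  unfold gammaPDFReal
  split_ifs
  · rw [div_rpow hr hrs.le, show -((r + s) * y) = -(r * y) + -(s * y) by ring, exp_add]
    field_simp [(rpow_pos_of_pos hrs a).ne']
  · simp

lemma gammaMeasure_withDensity_exp_neg_mul {a r s : ℝ} (hr : 0 ≤ r) (hrs : 0 < r + s) :
    (gammaMeasure a r).withDensity (fun y ↦ ENNReal.ofReal (exp (-(s * y)))) =
      ENNReal.ofReal ((r / (r + s)) ^ a) • gammaMeasure a (r + s) := by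
  have hpdf (b : ℝ) : Measurable (gammaPDF a b) := (measurable_gammaPDFReal a b).ennreal_ofReal
  rw [gammaMeasure, gammaMeasure, ← withDensity_mul _ (hpdf r) (by fun_prop),
    ← withDensity_smul _ (hpdf (r + s))]
  congr 1
  funext y
  simp only [Pi.mul_apply, Pi.smul_apply, smul_eq_mul, gammaPDF,
    ← ENNReal.ofReal_mul (rpow_nonneg (div_nonneg hr hrs.le) a),
    ← gammaPDFReal_mul_exp_neg_mul hr hrs, ENNReal.ofReal_mul' (exp_pos _).le]

lemma ae_nonneg_gammaMeasure (a r : ℝ) : ∀ᵐ x ∂gammaMeasure a r, 0 ≤ x :=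
  (ae_withDensity_iff (measurable_gammaPDFReal a r).ennreal_ofReal).2 <|
    ae_of_all _ fun _ hx ↦ not_lt.1 fun hneg ↦ hx (gammaPDF_of_neg hneg)

lemma lintegral_exp_neg_mul_gammaMeasure {a r s : ℝ} (ha : 0 < a) (hr : 0 ≤ r) (hrs : 0 < r + s) :
    ∫⁻ y, ENNReal.ofReal (exp (-(s * y))) ∂gammaMeasure a r =
      ENNReal.ofReal ((r / (r + s)) ^ a) := by
  have := isProbabilityMeasure_gammaMeasure ha hrs
  simpa [withDensity_apply _ MeasurableSet.univ] using
    congrArg (· univ) (gammaMeasure_withDensity_exp_neg_mul (a := a) hr hrs)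

lemma lintegral_one_sub_exp_neg_mul_gammaMeasure {a r s : ℝ} (ha : 0 < a) (hr : 0 < r)
    (hs : 0 ≤ s) :
    ∫⁻ z, ENNReal.ofReal (1 - exp (-(s * z))) ∂gammaMeasure a r =
      ENNReal.ofReal (1 - (r / (r + s)) ^ a) := by
  have := isProbabilityMeasure_gammaMeasure ha hr
  have hle : ∀ᵐ z ∂gammaMeasure a r, ENNReal.ofReal (exp (-(s * z))) ≤ 1 := by
    filter_upwards [ae_nonneg_gammaMeasure a r] with z hz
    exact ENNReal.ofReal_le_one.2 (exp_le_one_iff.2 (by nlinarith))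
  have hrs : 0 < r + s := by linarith
  have hlaplace := lintegral_exp_neg_mul_gammaMeasure ha hr.le hrs
  simp_rw [ENNReal.ofReal_sub _ (exp_pos _).le, ENNReal.ofReal_one]
  rw [lintegral_sub (by fun_prop) (hlaplace ▸ ENNReal.ofReal_ne_top) hle, lintegral_const,
    measure_univ, one_mul, hlaplace,
    ENNReal.ofReal_sub _ (rpow_nonneg (div_nonneg hr.le hrs.le) a), ENNReal.ofReal_one]

lemma expMeasure_Ici {r t : ℝ} (hr : 0 < r) (ht : 0 ≤ t) :
    expMeasure r (Ici t) = ENNReal.ofReal (exp (-(r * t))) := by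
  have := isProbabilityMeasure_expMeasure hr
  have hatom : expMeasure r {t} = 0 := withDensity_absolutelyContinuous _ _ (measure_singleton t)
  rw [← measure_congr (Ioi_ae_eq_Ici' hatom), ← compl_Iic, prob_compl_eq_one_sub measurableSet_Iic,
    ← ofReal_cdf, cdf_expMeasure_eq hr, if_pos ht, ← ENNReal.ofReal_one,
    ← ENNReal.ofReal_sub _ (sub_nonneg.2 (exp_le_one_iff.2 (by nlinarith))), sub_sub_cancel]

lemma setLIntegral_Iic_exp_neg_mul_expMeasure {r s c : ℝ} (hr : 0 ≤ r) (hrs : 0 < r + s)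
    (hc : 0 ≤ c) :
    ∫⁻ y in Iic c, ENNReal.ofReal (exp (-(s * y))) ∂expMeasure r =
      ENNReal.ofReal (r / (r + s) * (1 - exp (-((r + s) * c)))) := by
  have := isProbabilityMeasure_expMeasure hrs
  rw [← withDensity_apply _ measurableSet_Iic, expMeasure,
    gammaMeasure_withDensity_exp_neg_mul hr hrs, Measure.smul_apply, ← expMeasure, ← ofReal_cdf,
    cdf_expMeasure_eq hrs, if_pos hc, rpow_one, smul_eq_mul,
    ← ENNReal.ofReal_mul (div_nonneg hr hrs.le)]

lemma setLIntegral_expMeasure_Ici_mul {r s p g z : ℝ} (hr : 0 < r) (hs : 0 < s) (hp : 0 ≤ p)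
    (hg : 0 < g) (hz : 0 ≤ z) :
    ∫⁻ y in {y | g * y ≤ z}, expMeasure s (Ici (p * y)) ∂expMeasure r =
      ENNReal.ofReal (r / (r + s * p) * (1 - exp (-((r + s * p) / g * z)))) := by
  have hset : {y | g * y ≤ z} = Iic (z / g) := by
    ext y; simp [le_div_iff₀ hg, mul_comm]
  rw [hset, setLIntegral_congr_fun_ae (g := fun y ↦ ENNReal.ofReal (exp (-(s * p * y))))
    measurableSet_Iic ?_,
    setLIntegral_Iic_exp_neg_mul_expMeasure hr.le (by positivity) (by positivity)]
  · rw [div_mul_eq_mul_div (r + s * p) g z, mul_div_assoc]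
  · filter_upwards [ae_nonneg_gammaMeasure 1 r] with y hy _
    rw [expMeasure_Ici hs (by positivity), ← mul_assoc]

lemma ProbabilityTheory.iIndepFun.map_prodMk_prodMk_eq_prod {Ω ι β : Type*} [MeasurableSpace Ω]
    [MeasurableSpace β] {μ : Measure Ω} [IsFiniteMeasure μ] {f : ι → Ω → β}
    (h : iIndepFun f μ) (hf : ∀ i, Measurable (f i)) {i j k : ι} (hij : i ≠ j) (hik : i ≠ k)
    (hjk : j ≠ k) :
    μ.map (fun ω ↦ (f i ω, f j ω, f k ω)) =
      (μ.map (f i)).prod ((μ.map (f j)).prod (μ.map (f k))) := by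
  rw [← ((h.indepFun hjk).map_prod_eq_prod_map_map (hf j).aemeasurable (hf k).aemeasurable)]
  exact (h.indepFun_prodMk hf j k i hij.symm hik.symm).symm.map_prod_eq_prod_map_map
    (hf i).aemeasurable ((hf j).prodMk (hf k)).aemeasurable

lemma measure_prod_prod_setOf_le_and_le {μ ν η : Measure ℝ} [SFinite ν] [SFinite η] {f g : ℝ → ℝ}
    (hf : Measurable f) (hg : Measurable g) :
    (μ.prod (ν.prod η)) {q | f q.2.1 ≤ q.2.2 ∧ g q.2.1 ≤ q.1} =
      ∫⁻ z, ∫⁻ y in {y | g y ≤ z}, η (Ici (f y)) ∂ν ∂μ := by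
  rw [Measure.prod_apply (by measurability)]
  refine lintegral_congr fun z ↦ ?_
  rw [Measure.prod_apply (by measurability), ← lintegral_indicator (by measurability)]
  refine lintegral_congr fun y ↦ ?_
  by_cases hy : g y ≤ z <;> simp [hy, indicator, Ici_def]

lemma measure_gammaMeasure_prod_expMeasure_prod_expMeasure {a t r s p g : ℝ} (ha : 0 < a)
    (ht : 0 < t) (hr : 0 < r) (hs : 0 < s) (hp : 0 ≤ p) (hg : 0 < g) :
    ((gammaMeasure a t).prod ((expMeasure r).prod (expMeasure s))
        {q | p * q.2.1 ≤ q.2.2 ∧ g * q.2.1 ≤ q.1}).toReal =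
      r / (r + s * p) * (1 - (t / (t + (r + s * p) / g)) ^ a) := by
  have := isProbabilityMeasure_expMeasure hr
  have := isProbabilityMeasure_expMeasure hs
  have hpow_le_one : (t / (t + (r + s * p) / g)) ^ a ≤ 1 :=
    rpow_le_one (by positivity)
      ((div_le_one (by positivity)).2 (le_add_of_nonneg_right (by positivity))) ha.le
  calc
    _ = (∫⁻ z, ∫⁻ y in {y | g * y ≤ z}, expMeasure s (Ici (p * y)) ∂expMeasure r
          ∂gammaMeasure a t).toReal := by
      rw [measure_prod_prod_setOf_le_and_le (by fun_prop) (by fun_prop)]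
    _ = (∫⁻ z, ENNReal.ofReal (r / (r + s * p)) *
          ENNReal.ofReal (1 - exp (-((r + s * p) / g * z))) ∂gammaMeasure a t).toReal := by
      refine congrArg ENNReal.toReal (lintegral_congr_ae ?_)
      filter_upwards [ae_nonneg_gammaMeasure a t] with z hz
      rw [setLIntegral_expMeasure_Ici_mul hr hs hp hg hz, ENNReal.ofReal_mul (by positivity)]
    _ = _ := by
      rw [lintegral_const_mul _ (by fun_prop),
        lintegral_one_sub_exp_neg_mul_gammaMeasure ha ht (by positivity),
        ← ENNReal.ofReal_mul (by positivity),
        ENNReal.toReal_ofReal (mul_nonneg (by positivity) (sub_nonneg.2 hpow_le_one))]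

/-- If `X ~ Exp(lsd)`, `Z ~ Gamma(L, lsr)` and `Y ~ Exp(lsp)` are mutually independent, then
`P[X ≥ ψ·Y ∧ Z ≥ (ψ/ξ)·Y] = (1/(1 + lsd ψ/lsp)) (1 − (1 + lsd ξ/lsr + lsp ξ/(lsr ψ))^{−L})`. -/
theorem p3_joint_success_probability
    {Ω : Type*} [MeasurableSpace Ω] (Pr : Measure Ω) [IsProbabilityMeasure Pr]
    (L : ℕ) (hL : 1 ≤ L) (lsd lsr lsp ψ ξ : ℝ)
    (hlsd : 0 < lsd) (hlsr : 0 < lsr) (hlsp : 0 < lsp) (hψ : 0 < ψ) (hξ : 0 < ξ)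
    (X Z Y : Ω → ℝ) (hX : Measurable X) (hZ : Measurable Z) (hY : Measurable Y)
    (hXd : Pr.map X = expMeasure lsd)
    (hZd : Pr.map Z = gammaMeasure L lsr)
    (hYd : Pr.map Y = expMeasure lsp)
    (hindep : iIndepFun ![X, Z, Y] Pr) :
    (Pr {ω | X ω ≥ ψ * Y ω ∧ Z ω ≥ (ψ / ξ) * Y ω}).toReal =
      (1 / (1 + lsd * ψ / lsp)) *
        (1 - (1 + lsd * ξ / lsr + lsp * ξ / (lsr * ψ)) ^ (-(L : ℤ))) := by
  have hmeas : ∀ i, Measurable (![X, Z, Y] i) := by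
    intro i; fin_cases i <;> assumption
  have hlaw : Pr.map (fun ω ↦ (Z ω, Y ω, X ω)) =
      (gammaMeasure L lsr).prod ((expMeasure lsp).prod (expMeasure lsd)) := by
    simpa [hXd, hYd, hZd] using
      hindep.map_prodMk_prodMk_eq_prod hmeas (i := 1) (j := 2) (k := 0) (by decide) (by decide)
        (by decide)
  have hevent : {ω | X ω ≥ ψ * Y ω ∧ Z ω ≥ (ψ / ξ) * Y ω} =
      (fun ω ↦ (Z ω, Y ω, X ω)) ⁻¹' {q | ψ * q.2.1 ≤ q.2.2 ∧ ψ / ξ * q.2.1 ≤ q.1} := rfl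
  rw [hevent, ← Measure.map_apply (by fun_prop) (by measurability), hlaw,
    measure_gammaMeasure_prod_expMeasure_prod_expMeasure (by exact_mod_cast hL) hlsr hlsp hlsd
      hψ.le (by positivity),
    rpow_natCast, zpow_neg, zpow_natCast, ← inv_pow]
  have hbase : (1 + lsd * ξ / lsr + lsp * ξ / (lsr * ψ))⁻¹ =
      lsr / (lsr + (lsp + lsd * ψ) / (ψ / ξ)) := by
    field_simp
    ring
  rw [hbase]
  congr 1
  field_simp
end

section
/- Let (Ω, P) be a probability space carrying mutually independent random variables X ~ Exp(λ_sd), Y ~ Exp(λ_sp), Z ~ Gamma(shape L, rate λ_sr), and let ψ, ξ, ζ, R > 0. Set A = {X ≥ ψY}, B = {Z ≥ (ψ/ξ)Y}, and let C be any event with A ⊆ C. Define τ = (ζR/2)·P(B ∩ C) and τ_in = (ζR/2)·P(Aᶜ ∩ B ∩ C) + ζR·P(A). Then τ_in = τ + (ζR/2)·(1/(1 + λ_sd ψ/λ_sp))·(1 + (1 + λ_sd ξ/λ_sr + λ_sp ξ/(λ_sr ψ))^{−L}). (This is the paper's Lemma relating the throughput τ_in of incremental relaying to the throughput τ of the EH-CCRN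 scheme.) -/
open MeasureTheory ProbabilityTheory Real

/-!
Since `A ⊆ C`, both `P(Aᶜ ∩ B ∩ C) + P(A)` and `P(B ∩ C) + P(A ∩ Bᶜ)` equal `P((A ∪ B) ∩ C)`,
so `τ_in - τ = (ζR/2)·(P(A) + P(A ∩ Bᶜ))`. Given `Y = y ≥ 0`, `X ≥ ψy` has probability
`exp(-λ_sd ψ y)`, and tilting `Exp(λ_sp)` by this factor gives `c·Exp(λ_sp + λ_sd ψ)` with
`c = λ_sp/(λ_sp + λ_sd ψ)`; hence `P(A) = c`. On `Bᶜ` we have `Y > ξZ/ψ`, so given `Z` the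
probability of `A ∩ Bᶜ` is `c·exp(-(λ_sp + λ_sd ψ)ξZ/ψ)`, and averaging over `Z` produces the
Laplace transform `(1 + λ_sd ξ/λ_sr + λ_sp ξ/(λ_sr ψ))^(-L)` of `Gamma(L, λ_sr)`.
-/

namespace ProbabilityTheory

open Set

lemma measurable_gammaPDF (a r : ℝ) : Measurable (gammaPDF a r) :=
  (measurable_gammaPDFReal a r).ennreal_ofReal

lemma gammaPDF_mul_exp_neg (a : ℝ) {r s : ℝ} (hr : 0 ≤ r) (hrs : 0 < r + s) (x : ℝ) :
    gammaPDF a r x * ENNReal.ofReal (exp (-(s * x))) =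
      ENNReal.ofReal ((r / (r + s)) ^ a) * gammaPDF a (r + s) x := by
  rcases lt_or_ge x 0 with hx | hx
  · simp [gammaPDF_of_neg hx]
  rw [gammaPDF_of_nonneg hx, gammaPDF_of_nonneg hx, ← ENNReal.ofReal_mul' (exp_nonneg _),
    ← ENNReal.ofReal_mul (by positivity)]
  have hpow : (r / (r + s)) ^ a * (r + s) ^ a = r ^ a := by
    rw [← mul_rpow (by positivity) hrs.le, div_mul_cancel₀ _ hrs.ne']
  rw [← hpow, mul_assoc _ (exp _), ← exp_add]
  ring_nf

lemma gammaMeasure_withDensity_exp_neg (a : ℝ) {r s : ℝ} (hr : 0 ≤ r) (hrs : 0 < r + s) :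
    (gammaMeasure a r).withDensity (fun x ↦ ENNReal.ofReal (exp (-(s * x)))) =
      ENNReal.ofReal ((r / (r + s)) ^ a) • gammaMeasure a (r + s) := by
  have hexp : Measurable fun x : ℝ ↦ ENNReal.ofReal (exp (-(s * x))) := by fun_prop
  rw [gammaMeasure, gammaMeasure, ← withDensity_mul _ (measurable_gammaPDF a r) hexp,
    ← withDensity_smul' _ _ ENNReal.ofReal_ne_top]
  congr 1
  funext x
  exact gammaPDF_mul_exp_neg a hr hrs x

lemma lintegral_exp_neg_mul_gammaMeasure {a r s : ℝ} (ha : 0 < a) (hr : 0 ≤ r)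
    (hrs : 0 < r + s) :
    ∫⁻ x, ENNReal.ofReal (exp (-(s * x))) ∂gammaMeasure a r =
      ENNReal.ofReal ((r / (r + s)) ^ a) := by
  have := isProbabilityMeasure_gammaMeasure ha hrs
  rw [← setLIntegral_univ, ← withDensity_apply _ MeasurableSet.univ,
    gammaMeasure_withDensity_exp_neg a hr hrs, Measure.smul_apply, measure_univ, smul_eq_mul,
    mul_one]

lemma ae_nonneg_gammaMeasure (a r : ℝ) : ∀ᵐ x ∂gammaMeasure a r, 0 ≤ x := by
  rw [gammaMeasure, ae_withDensity_iff (measurable_gammaPDF a r)]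
  refine Filter.Eventually.of_forall fun x hx ↦ ?_
  by_contra! hneg
  exact hx (gammaPDF_of_neg hneg)

lemma expMeasure_Ioi {r : ℝ} (hr : 0 < r) {t : ℝ} (ht : 0 ≤ t) :
    expMeasure r (Ioi t) = ENNReal.ofReal (exp (-(r * t))) := by
  have := isProbabilityMeasure_expMeasure hr
  rw [← compl_Iic, prob_compl_eq_one_sub measurableSet_Iic, ← ofReal_cdf, cdf_expMeasure_eq hr,
    if_pos ht, ← ENNReal.ofReal_one,
    ← ENNReal.ofReal_sub 1 (sub_nonneg.mpr (exp_le_one_iff.mpr (by nlinarith))), sub_sub_cancel]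

lemma expMeasure_Ici {r : ℝ} (hr : 0 < r) {t : ℝ} (ht : 0 ≤ t) :
    expMeasure r (Ici t) = ENNReal.ofReal (exp (-(r * t))) := by
  rw [← expMeasure_Ioi hr ht]
  exact measure_congr ((withDensity_absolutelyContinuous _ _).ae_eq Ioi_ae_eq_Ici).symm

lemma expMeasure_prod_expMeasure_mem_le {q r ψ : ℝ} (hq : 0 < q) (hr : 0 < r) (hψ : 0 ≤ ψ)
    {S : Set ℝ} (hS : MeasurableSet S) :
    ((expMeasure q).prod (expMeasure r)) {p | p.1 ∈ S ∧ ψ * p.1 ≤ p.2} =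
      ENNReal.ofReal (q / (q + r * ψ)) * expMeasure (q + r * ψ) S := by
  have := isProbabilityMeasure_expMeasure hr
  have hsection : ∀ᵐ y ∂expMeasure q,
      expMeasure r (Prod.mk y ⁻¹' {p | p.1 ∈ S ∧ ψ * p.1 ≤ p.2}) =
        S.indicator (fun y ↦ ENNReal.ofReal (exp (-(r * ψ * y)))) y := by
    filter_upwards [ae_nonneg_gammaMeasure 1 q] with y hy
    by_cases hyS : y ∈ S
    · rw [indicator_of_mem hyS, mul_assoc, ← expMeasure_Ici hr (by positivity)]
      congr 1
      ext x
      simp [hyS]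
    · simp [hyS]
  have hmeas : MeasurableSet {p : ℝ × ℝ | p.1 ∈ S ∧ ψ * p.1 ≤ p.2} :=
    (measurable_fst hS).inter (measurableSet_le (measurable_fst.const_mul ψ) measurable_snd)
  rw [Measure.prod_apply hmeas, lintegral_congr_ae hsection, lintegral_indicator hS,
    ← withDensity_apply _ hS, expMeasure,
    gammaMeasure_withDensity_exp_neg 1 hq.le (by positivity), rpow_one, Measure.smul_apply,
    smul_eq_mul, expMeasure]

lemma expMeasure_prod_expMeasure_le {q r ψ : ℝ} (hq : 0 < q) (hr : 0 < r) (hψ : 0 ≤ ψ) :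
    ((expMeasure q).prod (expMeasure r)) {p | ψ * p.1 ≤ p.2} =
      ENNReal.ofReal (q / (q + r * ψ)) := by
  have := isProbabilityMeasure_expMeasure (show 0 < q + r * ψ by positivity)
  simpa using expMeasure_prod_expMeasure_mem_le hq hr hψ MeasurableSet.univ

lemma gammaMeasure_prod_expMeasure_prod_expMeasure_lt_and_le {a g q r ψ ξ : ℝ} (ha : 0 < a)
    (hg : 0 < g) (hq : 0 < q) (hr : 0 < r) (hψ : 0 < ψ) (hξ : 0 < ξ) :
    ((gammaMeasure a g).prod ((expMeasure q).prod (expMeasure r)))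
        {p | p.1 < ψ / ξ * p.2.1 ∧ ψ * p.2.1 ≤ p.2.2} =
      ENNReal.ofReal (q / (q + r * ψ)) *
        ENNReal.ofReal ((g / (g + (q + r * ψ) * (ξ / ψ))) ^ a) := by
  have := isProbabilityMeasure_expMeasure hq
  have := isProbabilityMeasure_expMeasure hr
  have hsection : ∀ᵐ z ∂gammaMeasure a g, ((expMeasure q).prod (expMeasure r))
      (Prod.mk z ⁻¹' {p | p.1 < ψ / ξ * p.2.1 ∧ ψ * p.2.1 ≤ p.2.2}) =
      ENNReal.ofReal (q / (q + r * ψ)) *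
        ENNReal.ofReal (exp (-((q + r * ψ) * (ξ / ψ) * z))) := by
    filter_upwards [ae_nonneg_gammaMeasure a g] with z hz
    have hIoi :
        Prod.mk z ⁻¹' {p : ℝ × ℝ × ℝ | p.1 < ψ / ξ * p.2.1 ∧ ψ * p.2.1 ≤ p.2.2} =
          {p : ℝ × ℝ | p.1 ∈ Ioi (ξ / ψ * z) ∧ ψ * p.1 ≤ p.2} := by
      ext p
      simp only [mem_preimage, mem_ofPred_eq, mem_Ioi]
      rw [div_mul_eq_mul_div, lt_div_iff₀ hξ, div_mul_eq_mul_div, div_lt_iff₀ hψ, mul_comm z ξ,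
        mul_comm p.1 ψ]
    rw [hIoi, expMeasure_prod_expMeasure_mem_le hq hr hψ.le measurableSet_Ioi,
      expMeasure_Ioi (by positivity) (by positivity), mul_assoc]
  have hmeas : MeasurableSet {p : ℝ × ℝ × ℝ | p.1 < ψ / ξ * p.2.1 ∧ ψ * p.2.1 ≤ p.2.2} :=
    (measurableSet_lt measurable_fst (measurable_snd.fst.const_mul (ψ / ξ))).inter
      (measurableSet_le (measurable_snd.fst.const_mul ψ) measurable_snd.snd)
  rw [Measure.prod_apply hmeas, lintegral_congr_ae hsection,
    lintegral_const_mul' _ _ ENNReal.ofReal_ne_top,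
    lintegral_exp_neg_mul_gammaMeasure ha hg.le (by positivity)]

lemma measure_compl_inter_inter_add_eq {α : Type*} [MeasurableSpace α] (μ : Measure α)
    {A B C : Set α} (hA : MeasurableSet A) (hB : MeasurableSet B) (hAC : A ⊆ C) :
    μ (Aᶜ ∩ B ∩ C) + μ A = μ (B ∩ C) + μ (A ∩ Bᶜ) := by
  have hleft : Aᶜ ∩ B ∩ C ∪ A = (A ∪ B) ∩ C := by
    ext x; have := @hAC x; simp only [mem_union, mem_inter_iff, mem_compl_iff]; tauto
  have hright : B ∩ C ∪ A ∩ Bᶜ = (A ∪ B) ∩ C := by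
    ext x; have := @hAC x; simp only [mem_union, mem_inter_iff, mem_compl_iff]; tauto
  rw [← measure_union (by tauto_set) hA, ← measure_union (by tauto_set) (hA.inter hB.compl),
    hleft, hright]

section RandomVariables

variable {Ω : Type*} [MeasurableSpace Ω] {P : Measure Ω} [IsFiniteMeasure P]
    {X Y Z : Ω → ℝ} {a g q r ψ ξ : ℝ}

lemma measure_mul_le_of_indepFun_expMeasure (hX : Measurable X) (hY : Measurable Y)
    (hYX : IndepFun Y X P) (hYd : P.map Y = expMeasure q) (hXd : P.map X = expMeasure r)
    (hq : 0 < q) (hr : 0 < r) (hψ : 0 ≤ ψ) :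
    P {ω | ψ * Y ω ≤ X ω} = ENNReal.ofReal (q / (q + r * ψ)) := by
  have hmeas : MeasurableSet {p : ℝ × ℝ | ψ * p.1 ≤ p.2} :=
    measurableSet_le (measurable_fst.const_mul ψ) measurable_snd
  rw [show {ω | ψ * Y ω ≤ X ω} = (fun ω ↦ (Y ω, X ω)) ⁻¹' {p | ψ * p.1 ≤ p.2} from rfl,
    ← Measure.map_apply (hY.prodMk hX) hmeas,
    (indepFun_iff_map_prod_eq_prod_map_map hY.aemeasurable hX.aemeasurable).mp hYX, hYd, hXd,
    expMeasure_prod_expMeasure_le hq hr hψ]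

lemma measure_lt_mul_and_mul_le_of_indepFun (hX : Measurable X) (hY : Measurable Y)
    (hZ : Measurable Z) (hYX : IndepFun Y X P) (hZYX : IndepFun Z (fun ω ↦ (Y ω, X ω)) P)
    (hZd : P.map Z = gammaMeasure a g) (hYd : P.map Y = expMeasure q)
    (hXd : P.map X = expMeasure r) (ha : 0 < a) (hg : 0 < g) (hq : 0 < q) (hr : 0 < r)
    (hψ : 0 < ψ) (hξ : 0 < ξ) :
    P {ω | Z ω < ψ / ξ * Y ω ∧ ψ * Y ω ≤ X ω} =
      ENNReal.ofReal (q / (q + r * ψ)) *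
        ENNReal.ofReal ((g / (g + (q + r * ψ) * (ξ / ψ))) ^ a) := by
  have hmeas : MeasurableSet {p : ℝ × ℝ × ℝ | p.1 < ψ / ξ * p.2.1 ∧ ψ * p.2.1 ≤ p.2.2} :=
    (measurableSet_lt measurable_fst (measurable_snd.fst.const_mul (ψ / ξ))).inter
      (measurableSet_le (measurable_snd.fst.const_mul ψ) measurable_snd.snd)
  rw [show {ω | Z ω < ψ / ξ * Y ω ∧ ψ * Y ω ≤ X ω} = (fun ω ↦ (Z ω, Y ω, X ω)) ⁻¹'
      {p | p.1 < ψ / ξ * p.2.1 ∧ ψ * p.2.1 ≤ p.2.2} from rfl,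
    ← Measure.map_apply (hZ.prodMk (hY.prodMk hX)) hmeas,
    (indepFun_iff_map_prod_eq_prod_map_map hZ.aemeasurable (hY.prodMk hX).aemeasurable).mp hZYX,
    (indepFun_iff_map_prod_eq_prod_map_map hY.aemeasurable hX.aemeasurable).mp hYX, hZd, hYd, hXd,
    gammaMeasure_prod_expMeasure_prod_expMeasure_lt_and_le ha hg hq hr hψ hξ]

end RandomVariables

end ProbabilityTheory

theorem incremental_relaying_throughput_relation_general
    {Ω : Type*} [MeasurableSpace Ω] (Pr : Measure Ω) [IsProbabilityMeasure Pr]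
    (L : ℕ) (hL : 1 ≤ L) (lsd lsp lsr ψ ξ ζ R : ℝ)
    (hlsd : 0 < lsd) (hlsp : 0 < lsp) (hlsr : 0 < lsr)
    (hψ : 0 < ψ) (hξ : 0 < ξ)
    (X Y Z : Ω → ℝ) (hX : Measurable X) (hY : Measurable Y) (hZ : Measurable Z)
    (hXd : Pr.map X = expMeasure lsd)
    (hYd : Pr.map Y = expMeasure lsp)
    (hZd : Pr.map Z = gammaMeasure L lsr)
    (hindep : iIndepFun (m := fun _ : Fin 3 => (inferInstance : MeasurableSpace ℝ)) ![X, Y, Z] Pr)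
    (C : Set Ω)
    (hAC : {ω | X ω ≥ ψ * Y ω} ⊆ C)
    (τ τin : ℝ)
    (hτ : τ = (ζ * R / 2) * (Pr ({ω | Z ω ≥ (ψ / ξ) * Y ω} ∩ C)).toReal)
    (hτin : τin =
      (ζ * R / 2) * (Pr ({ω | X ω ≥ ψ * Y ω}ᶜ ∩ {ω | Z ω ≥ (ψ / ξ) * Y ω} ∩ C)).toReal
        + ζ * R * (Pr {ω | X ω ≥ ψ * Y ω}).toReal) :
    τin = τ + (ζ * R / 2) * (1 / (1 + lsd * ψ / lsp)) *
      (1 + (1 + lsd * ξ / lsr + lsp * ξ / (lsr * ψ)) ^ (-(L : ℤ))) := by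
  set A := {ω | X ω ≥ ψ * Y ω}
  set B := {ω | Z ω ≥ (ψ / ξ) * Y ω}
  have hA : MeasurableSet A := measurableSet_le (hY.const_mul ψ) hX
  have hB : MeasurableSet B := measurableSet_le (hY.const_mul (ψ / ξ)) hZ
  have hmeas : ∀ i, Measurable (![X, Y, Z] i) := fun i ↦ by fin_cases i <;> assumption
  have hYX : IndepFun Y X Pr := hindep.indepFun (show (1 : Fin 3) ≠ 0 by decide)
  have hZYX : IndepFun Z (fun ω ↦ (Y ω, X ω)) Pr :=
    (hindep.indepFun_prodMk hmeas 1 0 2 (by decide) (by decide)).symm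
  have hPA : Pr A = ENNReal.ofReal (lsp / (lsp + lsd * ψ)) :=
    measure_mul_le_of_indepFun_expMeasure hX hY hYX hYd hXd hlsp hlsd hψ.le
  have hPABc : Pr (A ∩ Bᶜ) = ENNReal.ofReal (lsp / (lsp + lsd * ψ)) *
      ENNReal.ofReal ((lsr / (lsr + (lsp + lsd * ψ) * (ξ / ψ))) ^ (L : ℝ)) := by
    rw [show A ∩ Bᶜ = {ω | Z ω < ψ / ξ * Y ω ∧ ψ * Y ω ≤ X ω} by ext; simp [A, B, and_comm]]
    exact measure_lt_mul_and_mul_le_of_indepFun hX hY hZ hYX hZYX hZd hYd hXd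
      (Nat.cast_pos.mpr hL) hlsr hlsp hlsd hψ hξ
  have hsplit := congrArg ENNReal.toReal (measure_compl_inter_inter_add_eq Pr hA hB hAC)
  rw [ENNReal.toReal_add (measure_ne_top _ _) (measure_ne_top _ _),
    ENNReal.toReal_add (measure_ne_top _ _) (measure_ne_top _ _), hPA, hPABc,
    ENNReal.toReal_mul, ENNReal.toReal_ofReal (by positivity),
    ENNReal.toReal_ofReal (by positivity)] at hsplit
  have hc : lsp / (lsp + lsd * ψ) = 1 / (1 + lsd * ψ / lsp) := by
    field_simp
  have hw : (lsr / (lsr + (lsp + lsd * ψ) * (ξ / ψ))) ^ (L : ℝ) =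
      (1 + lsd * ξ / lsr + lsp * ξ / (lsr * ψ)) ^ (-(L : ℤ)) := by
    rw [show 1 + lsd * ξ / lsr + lsp * ξ / (lsr * ψ) = (lsr + (lsp + lsd * ψ) * (ξ / ψ)) / lsr by
        field_simp; ring,
      rpow_natCast, zpow_neg, zpow_natCast, ← inv_pow, inv_div]
  rw [hPA, ENNReal.toReal_ofReal (by positivity)] at hτin
  rw [hτin, hτ, ← hc, ← hw]
  linear_combination (ζ * R / 2) * hsplit

/-- Relation between the throughput `τ_in` of incremental relaying and the throughput `τ`
of the EH-CCRN scheme: with `A = {X ≥ ψY}`, `B = {Z ≥ (ψ/ξ)Y}` and any event `C ⊇ A`,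
`τ_in = τ + (ζR/2)·(1/(1 + lsd ψ/lsp))·(1 + (1 + lsd ξ/lsr + lsp ξ/(lsr ψ))^{−L})`. -/
theorem incremental_relaying_throughput_relation
    {Ω : Type*} [MeasurableSpace Ω] (Pr : Measure Ω) [IsProbabilityMeasure Pr]
    (L : ℕ) (hL : 1 ≤ L) (lsd lsp lsr ψ ξ ζ R : ℝ)
    (hlsd : 0 < lsd) (hlsp : 0 < lsp) (hlsr : 0 < lsr)
    (hψ : 0 < ψ) (hξ : 0 < ξ) (hζ : 0 < ζ) (hR : 0 < R)
    (X Y Z : Ω → ℝ) (hX : Measurable X) (hY : Measurable Y) (hZ : Measurable Z)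
    (hXd : Pr.map X = expMeasure lsd)
    (hYd : Pr.map Y = expMeasure lsp)
    (hZd : Pr.map Z = gammaMeasure L lsr)
    (hindep : iIndepFun (m := fun _ : Fin 3 => (inferInstance : MeasurableSpace ℝ)) ![X, Y, Z] Pr)
    (C : Set Ω) (hC : MeasurableSet C)
    (hAC : {ω | X ω ≥ ψ * Y ω} ⊆ C)
    (τ τin : ℝ)
    (hτ : τ = (ζ * R / 2) * (Pr ({ω | Z ω ≥ (ψ / ξ) * Y ω} ∩ C)).toReal)
    (hτin : τin =
      (ζ * R / 2) * (Pr ({ω | X ω ≥ ψ * Y ω}ᶜ ∩ {ω | Z ω ≥ (ψ / ξ) * Y ω} ∩ C)).toReal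
        + ζ * R * (Pr {ω | X ω ≥ ψ * Y ω}).toReal) :
    τin = τ + (ζ * R / 2) * (1 / (1 + lsd * ψ / lsp)) *
      (1 + (1 + lsd * ξ / lsr + lsp * ξ / (lsr * ψ)) ^ (-(L : ℤ))) :=
  incremental_relaying_throughput_relation_general Pr L hL lsd lsp lsr ψ ξ ζ R hlsd hlsp hlsr hψ hξ
    X Y Z hX hY hZ hXd hYd hZd hindep C hAC τ τin hτ hτin
end

section
/- Let λ_rd, λ_rp, P, I, x > 0. Let H ~ Exp(λ_rd) and G ~ Exp(λ_rp) be independent. Then P[min(P, I/G)·H < x] = 1 − e^{−λ_rd x/P}·(1 − ((λ_rd x/(I λ_rp))/(1 + λ_rd x/(I λ_rp)))·e^{−λ_rp I/P}). (This is the paper's exact conditional CDF F_{X_j}(x | ʰP_r) of the per-antenna second-hop SNR numerator X_j = min(ʰP_r, I/|g_rp|²)·|h_rd|² given the harvested power ʰP_r = P.) -/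
/-!
Given `G = g > 0`, the event is `H < x / min P (I / g) = (x / I) * max (I / P) g`, which has
probability `1 - exp (-(c * max s g))` with `c = lrd * x / I` and `s = I / P`. Integrating against
`Exp(lrp)`, the range `g ≤ s` contributes `e^{-cs} (1 - e^{-lrp s})` and the range `g > s`
contributes `lrp / (lrp + c) * e^{-(lrp + c) s}`, so that
`E[exp (-(c * max s G))] = e^{-cs} (1 - c / (lrp + c) * e^{-lrp s})`.
-/

open MeasureTheory ProbabilityTheory Real Set

lemma expMeasure_Iic {r t : ℝ} (hr : 0 < r) (ht : 0 ≤ t) :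
    expMeasure r (Iic t) = ENNReal.ofReal (1 - exp (-(r * t))) := by
  have := isProbabilityMeasure_expMeasure hr
  rw [← ofReal_cdf, cdf_expMeasure_eq hr, if_pos ht]

lemma expMeasure_Iio {r t : ℝ} (hr : 0 < r) (ht : 0 ≤ t) :
    expMeasure r (Iio t) = ENNReal.ofReal (1 - exp (-(r * t))) := by
  rw [← expMeasure_Iic hr ht]
  exact measure_congr ((withDensity_absolutelyContinuous _ _).ae_eq Iio_ae_eq_Iic)

lemma ae_pos_expMeasure {r : ℝ} (hr : 0 < r) : ∀ᵐ g ∂expMeasure r, 0 < g := by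
  have h := expMeasure_Iic hr le_rfl
  rw [mul_zero, neg_zero, exp_zero, sub_self, ENNReal.ofReal_zero] at h
  simp only [ae_iff, not_lt]
  exact h

lemma integrable_exp_neg_mul_max {μ : Measure ℝ} [IsFiniteMeasure μ] {c s : ℝ} (hc : 0 ≤ c)
    (hs : 0 ≤ s) : Integrable (fun g ↦ exp (-(c * max s g))) μ := by
  refine .of_bound (by fun_prop) 1 (.of_forall fun g ↦ ?_)
  rw [norm_of_nonneg (exp_pos _).le, exp_le_one_iff, neg_nonpos]
  exact mul_nonneg hc (hs.trans (le_max_left s g))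

lemma setIntegral_Ioi_exp_neg_mul_expMeasure {r c s : ℝ} (hr : 0 < r) (hc : 0 < r + c)
    (hs : 0 ≤ s) :
    ∫ g in Ioi s, exp (-(c * g)) ∂expMeasure r = r / (r + c) * exp (-((r + c) * s)) := by
  calc ∫ g in Ioi s, exp (-(c * g)) ∂expMeasure r
      = ∫ g in Ioi s, r * exp (-(r + c) * g) := by
        rw [expMeasure, gammaMeasure, setIntegral_withDensity_eq_setIntegral_toReal_smul
          (show Measurable (gammaPDF 1 r) from (measurable_gammaPDFReal 1 r).ennreal_ofReal)
          (.of_forall fun _ ↦ ENNReal.ofReal_lt_top) _ measurableSet_Ioi]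
        refine setIntegral_congr_fun measurableSet_Ioi fun g (hg : s < g) ↦ ?_
        rw [show gammaPDF 1 r = exponentialPDF r from rfl,
          exponentialPDF_of_nonneg (hs.trans hg.le), ENNReal.toReal_ofReal (by positivity),
          smul_eq_mul, mul_assoc, ← exp_add]
        ring_nf
    _ = r / (r + c) * exp (-((r + c) * s)) := by
        rw [integral_const_mul, integral_exp_mul_Ioi (by linarith)]
        field_simp

lemma integral_exp_neg_mul_max_expMeasure {r c s : ℝ} (hr : 0 < r) (hc : 0 ≤ c) (hs : 0 ≤ s) :
    ∫ g, exp (-(c * max s g)) ∂expMeasure r =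
      exp (-(c * s)) * (1 - c / (r + c) * exp (-(r * s))) := by
  have := isProbabilityMeasure_expMeasure hr
  have hlow : ∫ g in Iic s, exp (-(c * max s g)) ∂expMeasure r =
      (1 - exp (-(r * s))) * exp (-(c * s)) := by
    rw [setIntegral_congr_fun measurableSet_Iic fun g (hg : g ≤ s) ↦ by rw [max_eq_left hg],
      setIntegral_const, smul_eq_mul, ← cdf_eq_real, cdf_expMeasure_eq hr, if_pos hs]
  have hhigh : ∫ g in Ioi s, exp (-(c * max s g)) ∂expMeasure r =
      r / (r + c) * exp (-((r + c) * s)) := by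
    rw [setIntegral_congr_fun measurableSet_Ioi fun g (hg : s < g) ↦ by rw [max_eq_right hg.le]]
    exact setIntegral_Ioi_exp_neg_mul_expMeasure hr (by linarith) hs
  rw [← integral_add_compl measurableSet_Iic (integrable_exp_neg_mul_max hc hs), compl_Iic, hlow,
    hhigh, add_mul, neg_add, exp_add]
  field_simp
  ring

lemma measure_setOf_eq_lintegral_of_indepFun {Ω α β : Type*} [MeasurableSpace Ω]
    [MeasurableSpace α] [MeasurableSpace β] {μ : Measure Ω} [IsFiniteMeasure μ]
    {X : Ω → α} {Y : Ω → β}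
    (hX : Measurable X) (hY : Measurable Y) (h : IndepFun X Y μ) {p : α → β → Prop}
    (hp : MeasurableSet {q : α × β | p q.1 q.2}) :
    μ {ω | p (X ω) (Y ω)} = ∫⁻ a, μ.map Y {b | p a b} ∂μ.map X := by
  change μ ((fun ω ↦ (X ω, Y ω)) ⁻¹' {q | p q.1 q.2}) = _
  rw [← Measure.map_apply (hX.prodMk hY) hp,
    (indepFun_iff_map_prod_eq_prod_map_map hX.aemeasurable hY.aemeasurable).1 h,
    Measure.prod_apply hp]
  rfl

lemma min_div_eq_div_max {P I g : ℝ} (hP : 0 < P) (hI : 0 < I) (hg : 0 < g) :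
    min P (I / g) = I / max (I / P) g := by
  rcases le_total (I / P) g with h | h
  · rw [max_eq_right h, min_eq_right]
    rwa [div_le_iff₀ hg, mul_comm, ← div_le_iff₀ hP]
  · rw [max_eq_left h, min_eq_left, div_div_cancel₀ hI.ne']
    rwa [le_div_iff₀ hg, mul_comm, ← le_div_iff₀ hP]

lemma expMeasure_setOf_min_div_mul_lt {r P I g x : ℝ} (hr : 0 < r) (hP : 0 < P) (hI : 0 < I)
    (hg : 0 < g) (hx : 0 < x) :
    expMeasure r {h | min P (I / g) * h < x} =
      ENNReal.ofReal (1 - exp (-(r * x / I * max (I / P) g))) := by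
  have hm : 0 < min P (I / g) := lt_min hP (div_pos hI hg)
  have hset : {h | min P (I / g) * h < x} = Iio (x / min P (I / g)) := by
    ext h
    rw [mem_ofPred_eq, mem_Iio, lt_div_iff₀ hm, mul_comm]
  rw [hset, expMeasure_Iio hr (div_pos hx hm).le, min_div_eq_div_max hP hI hg,
    div_div_eq_mul_div]
  ring_nf

/-- Conditional CDF of the per-antenna second-hop SNR numerator: for independent
`H ~ Exp(lrd)` and `G ~ Exp(lrp)` and constants `P, I, x > 0`,
`P[min(P, I/G)·H < x] = 1 − e^{−lrd·x/P}(1 − ((lrd·x/(I·lrp))/(1 + lrd·x/(I·lrp)))·e^{−lrp·I/P})`. -/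
theorem second_hop_conditional_cdf
    {Ω : Type*} [MeasurableSpace Ω] (Pr : Measure Ω) [IsProbabilityMeasure Pr]
    (lrd lrp P I x : ℝ)
    (hlrd : 0 < lrd) (hlrp : 0 < lrp) (hP : 0 < P) (hI : 0 < I) (hx : 0 < x)
    (H G : Ω → ℝ) (hH : Measurable H) (hG : Measurable G)
    (hHd : Pr.map H = expMeasure lrd)
    (hGd : Pr.map G = expMeasure lrp)
    (hindep : IndepFun H G Pr) :
    (Pr {ω | min P (I / G ω) * H ω < x}).toReal =
      1 - Real.exp (-(lrd * x / P)) *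
        (1 - ((lrd * x / (I * lrp)) / (1 + lrd * x / (I * lrp))) *
          Real.exp (-(lrp * I / P))) := by
  have := isProbabilityMeasure_expMeasure hlrp
  have hS : MeasurableSet {p : ℝ × ℝ | min P (I / p.1) * p.2 < x} := by
    refine measurableSet_lt ?_ measurable_const
    fun_prop
  have hslice : ∀ᵐ g ∂expMeasure lrp, expMeasure lrd {h | min P (I / g) * h < x} =
      ENNReal.ofReal (1 - exp (-(lrd * x / I * max (I / P) g))) :=
    (ae_pos_expMeasure hlrp).mono fun g hg ↦ expMeasure_setOf_min_div_mul_lt hlrd hP hI hg hx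
  have hnonneg : ∀ g, 0 ≤ 1 - exp (-(lrd * x / I * max (I / P) g)) := fun g ↦ by
    rw [sub_nonneg, exp_le_one_iff, neg_nonpos]
    positivity
  rw [measure_setOf_eq_lintegral_of_indepFun (p := fun g h ↦ min P (I / g) * h < x) hG hH
      hindep.symm hS, hGd, hHd, lintegral_congr_ae hslice,
    ← integral_eq_lintegral_of_nonneg_ae (.of_forall hnonneg) (by fun_prop),
    integral_sub (integrable_const 1) (integrable_exp_neg_mul_max (by positivity) (by positivity)),
    integral_exp_neg_mul_max_expMeasure hlrp (by positivity) (by positivity)]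
  have hexp₁ : lrd * x / I * (I / P) = lrd * x / P := by field_simp
  have hexp₂ : lrp * (I / P) = lrp * I / P := mul_div_assoc' _ _ _
  have hcoef : lrd * x / I / (lrp + lrd * x / I) =
      lrd * x / (I * lrp) / (1 + lrd * x / (I * lrp)) := by
    field_simp
  rw [integral_const, probReal_univ, one_smul, hexp₁, hexp₂, hcoef]
end

section
/- Let λ_sd, λ_sp, λ_sr, λ_rd, ψ, η > 0 and set A = λ_sp/(λ_sd ψ), K = 1/(1+A), B = η λ_sp/(ψ λ_rd λ_sr), C = η ψ λ_sr/(λ_rd λ_sp). Assume √(1+A)·ψ λ_sr/λ_sp < 1. Then the strictly convex function g(ρ) = K/(1+Bρ) + Cρ/(1−ρ) attains its unique global minimum on (0,1) at ρ*_ps = (1 − √(1+A)·ψ λ_sr/λ_sp)/(1 + √(1+A)·η/λ_rd); equivalently, the approximate PS-EH throughput (R_s/2)(1 − g(ρ)) is maximized over ρ ∈ (0,1) exactly at ρ*_ps. (This is the paper's Lemma 3, PS-EH case, for L = 1.) -/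
/-!
Writing `Cρ/(1-ρ) = CB/(B(1-ρ)) - C`, the objective becomes `K/x + CB/y - C` with
`x = 1 + Bρ` and `y = B(1-ρ)`, whose sum `1 + B` does not depend on `ρ`. On a line
`x + y = const`, the sum `K/x + D/y` is strictly minimised where `K y² = D x²`; with
`s = √(1+A)·ψλ_sr/λ_sp` one has `C = K B s²`, so this happens at `y = B s x`, i.e. at
`ρ = (1 - s)/(1 + B s)`, and `B s = √(1+A)·η/λ_rd`.
-/

open Real Set

theorem div_add_div_lt_of_add_eq {K D x y x₀ y₀ : ℝ} (hK : 0 < K) (hx : 0 < x) (hy : 0 < y)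
    (hx₀ : 0 < x₀) (hy₀ : 0 < y₀) (hsum : x + y = x₀ + y₀) (hopt : K * y₀ ^ 2 = D * x₀ ^ 2)
    (hne : x ≠ x₀) :
    K / x₀ + D / y₀ < K / x + D / y := by
  obtain rfl : D = K * y₀ ^ 2 / x₀ ^ 2 := by
    rw [eq_div_iff (by positivity)]; exact hopt.symm
  obtain rfl : y = x₀ + y₀ - x := by linarith
  have hgap : K / x + K * y₀ ^ 2 / x₀ ^ 2 / (x₀ + y₀ - x) - (K / x₀ + K * y₀ ^ 2 / x₀ ^ 2 / y₀)
      = K * (x₀ + y₀) * (x - x₀) ^ 2 / (x * x₀ ^ 2 * (x₀ + y₀ - x)) := by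
    field_simp
    ring
  have : x - x₀ ≠ 0 := sub_ne_zero.mpr hne
  have : 0 < K * (x₀ + y₀) * (x - x₀) ^ 2 / (x * x₀ ^ 2 * (x₀ + y₀ - x)) := by positivity
  linarith

noncomputable def psObjective (K B C ρ : ℝ) : ℝ := K / (1 + B * ρ) + C * ρ / (1 - ρ)

theorem psObjective_eq {K B C ρ : ℝ} (hB : B ≠ 0) (hρ : ρ ≠ 1) :
    psObjective K B C ρ = K / (1 + B * ρ) + C * B / (B * (1 - ρ)) - C := by
  have : 1 - ρ ≠ 0 := sub_ne_zero.mpr hρ.symm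
  unfold psObjective
  field_simp
  ring

theorem one_sub_div_one_add_mul_mem_Ioo {B s : ℝ} (hB : 0 < B) (hs₀ : 0 < s) (hs₁ : s < 1) :
    (1 - s) / (1 + B * s) ∈ Ioo 0 1 := by
  have hden : 0 < 1 + B * s := by positivity
  refine ⟨div_pos (by linarith) hden, (div_lt_one hden).mpr ?_⟩
  nlinarith

theorem psObjective_lt_of_ne {K B C s ρ : ℝ} (hK : 0 < K) (hB : 0 < B) (hs₀ : 0 < s)
    (hs₁ : s < 1) (hC : C = K * B * s ^ 2) (hρ : ρ ∈ Ioo 0 1) (hne : ρ ≠ (1 - s) / (1 + B * s)) :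
    psObjective K B C ((1 - s) / (1 + B * s)) < psObjective K B C ρ := by
  set ρ₀ := (1 - s) / (1 + B * s)
  obtain ⟨hρ₀0, hρ₀1⟩ := one_sub_div_one_add_mul_mem_Ioo hB hs₀ hs₁
  obtain ⟨hρ0, hρ1⟩ := hρ
  have hcompl : 1 - ρ₀ = s * (1 + B * ρ₀) := by
    have : 0 < 1 + B * s := by positivity
    simp only [ρ₀]
    field_simp
    ring
  have hopt : K * (B * (1 - ρ₀)) ^ 2 = C * B * (1 + B * ρ₀) ^ 2 := by
    rw [hcompl, hC]; ring
  have hxne : 1 + B * ρ ≠ 1 + B * ρ₀ := fun h =>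
    hne (mul_left_cancel₀ hB.ne' (add_left_cancel h))
  have key := div_add_div_lt_of_add_eq hK (by positivity) (mul_pos hB (sub_pos.mpr hρ1))
    (by positivity) (mul_pos hB (sub_pos.mpr hρ₀1)) (by ring) hopt hxne
  rw [psObjective_eq hB.ne' hρ1.ne, psObjective_eq hB.ne' hρ₀1.ne]
  linarith

/-- The strictly convex function `g(ρ) = K/(1+Bρ) + Cρ/(1−ρ)` attains its unique global
minimum on `(0,1)` at `ρ*_ps = (1 − √(1+A)·ψλ_sr/λ_sp)/(1 + √(1+A)·η/λ_rd)`;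
equivalently, the approximate PS-EH throughput is maximized exactly at `ρ*_ps`. -/
theorem ps_eh_optimal_power_splitting_fraction
    (lsd lsp lsr lrd ψ η : ℝ)
    (hlsd : 0 < lsd) (hlsp : 0 < lsp) (hlsr : 0 < lsr) (hlrd : 0 < lrd)
    (hψ : 0 < ψ) (hη : 0 < η)
    (A K B C ρstar : ℝ)
    (hA : A = lsp / (lsd * ψ))
    (hK : K = 1 / (1 + A))
    (hB : B = η * lsp / (ψ * lrd * lsr))
    (hC : C = η * ψ * lsr / (lrd * lsp))
    (hsmall : Real.sqrt (1 + A) * ψ * lsr / lsp < 1)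
    (hρ : ρstar = (1 - Real.sqrt (1 + A) * ψ * lsr / lsp) /
      (1 + Real.sqrt (1 + A) * η / lrd)) :
    ρstar ∈ Set.Ioo (0 : ℝ) 1 ∧
    ∀ ρ ∈ Set.Ioo (0 : ℝ) 1, ρ ≠ ρstar →
      K / (1 + B * ρstar) + C * ρstar / (1 - ρstar) <
        K / (1 + B * ρ) + C * ρ / (1 - ρ) := by
  have h1A : 0 < 1 + A := by rw [hA]; positivity
  set q := √(1 + A)
  have hq₀ : 0 < q := sqrt_pos.mpr h1A
  have hq2 : q ^ 2 = 1 + A := sq_sqrt h1A.le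
  set s := q * ψ * lsr / lsp with hs
  have hs₀ : 0 < s := by positivity
  have hK₀ : 0 < K := by rw [hK]; positivity
  have hB₀ : 0 < B := by rw [hB]; positivity
  have hBs : B * s = q * η / lrd := by
    rw [hB, hs]; field_simp
  have hCs : C = K * B * s ^ 2 := by
    rw [hK, hB, hC, hs, ← hq2]; field_simp
  rw [← hBs] at hρ
  subst hρ
  exact ⟨one_sub_div_one_add_mul_mem_Ioo hB₀ hs₀ hsmall,
    fun ρ hρ hne => psObjective_lt_of_ne hK₀ hB₀ hs₀ hsmall hCs hρ hne⟩
end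

section
/- Let K > 0 and D > 1. The function h : (0,1) → ℝ defined by h(ρ) = (1−ρ) − K·(1−ρ)²/(1 + (D−1)ρ) is strictly concave on (0,1). Consequently, the approximate TS-EH throughput τ̃_ts(ρ) = (R_s/2)·h(ρ) (R_s > 0) is a strictly concave function of the time-switching fraction ρ on (0,1). (This is the exact form, for L = 1, of the paper's concavity Lemma in the TS-EH case.) -/
/-!
Put `u = 1 + (D - 1) ρ`. Since `(D - 1)(1 - ρ) = D - u`, partial fractions give
`h(ρ) = (affine in ρ) - K D² / (D - 1)² · u⁻¹`, and `u ↦ u⁻¹` is strictly convex on `u > 0`.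
So `h` is an affine function plus a positive multiple of a strictly concave one.
-/

open Set Function

section
variable {𝕜 E F β : Type*} [Ring 𝕜] [PartialOrder 𝕜] [AddCommGroup E] [AddCommGroup F]
  [Module 𝕜 E] [Module 𝕜 F] [AddCommMonoid β] [PartialOrder β] [SMul 𝕜 β]

theorem StrictConvexOn.comp_affineMap {f : F → β} {g : E →ᵃ[𝕜] F} (hg : Injective g)
    {s : Set F} (hf : StrictConvexOn 𝕜 s f) : StrictConvexOn 𝕜 (g ⁻¹' s) (f ∘ g) :=
  ⟨hf.1.affine_preimage g, fun x hx y hy hxy a b ha hb hab => by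
    simpa only [comp_apply, Convex.combo_affine_apply hab] using
      hf.2 hx hy (hg.ne hxy) ha hb hab⟩

end

theorem StrictConcaveOn.const_mul {𝕜 E : Type*} [CommRing 𝕜] [PartialOrder 𝕜]
    [IsStrictOrderedRing 𝕜] [AddCommMonoid E] [SMul 𝕜 E] {s : Set E} {f : E → 𝕜} {c : 𝕜}
    (hc : 0 < c) (hf : StrictConcaveOn 𝕜 s f) : StrictConcaveOn 𝕜 s fun x => c * f x :=
  ⟨hf.1, fun x hx y hy hxy a b ha hb hab => by
    have key := mul_lt_mul_of_pos_left (hf.2 hx hy hxy ha hb hab) hc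
    simp only [smul_eq_mul] at key ⊢
    linear_combination key⟩

theorem strictConvexOn_inv_affine {a b : ℝ} (hb : b ≠ 0) :
    StrictConvexOn ℝ {x | 0 < a + b * x} fun x => (a + b * x)⁻¹ := by
  let g : ℝ →ᵃ[ℝ] ℝ := AffineMap.const ℝ ℝ a + (LinearMap.mul ℝ ℝ b).toAffineMap
  have hg : ∀ x, g x = a + b * x := fun x => rfl
  have hinj : Injective g := fun x y h => by simpa [hg, hb] using h
  simpa [comp_def, hg, preimage] using
    (strictConvexOn_zpow (m := -1) (by norm_num) (by norm_num)).comp_affineMap hinj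

theorem one_sub_sq_div_one_add_mul_eq {D ρ : ℝ} (hD : D ≠ 1) (hρ : 1 + (D - 1) * ρ ≠ 0) :
    (1 - ρ) ^ 2 / (1 + (D - 1) * ρ) =
      (D ^ 2 * (1 + (D - 1) * ρ)⁻¹ - 2 * D + (1 + (D - 1) * ρ)) / (D - 1) ^ 2 := by
  have hD' : D - 1 ≠ 0 := sub_ne_zero.2 hD
  generalize hu : 1 + (D - 1) * ρ = u at hρ ⊢
  field_simp
  linear_combination (-((D - 1) * (1 - ρ) + (D - u))) * hu

theorem strictConcaveOn_one_sub_sub_mul_sq_div {K D : ℝ} (hK : 0 < K) (hD₀ : D ≠ 0)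
    (hD₁ : D ≠ 1) :
    StrictConcaveOn ℝ {ρ | 0 < 1 + (D - 1) * ρ}
      (fun ρ => (1 - ρ) - K * (1 - ρ) ^ 2 / (1 + (D - 1) * ρ)) := by
  have hD' : D - 1 ≠ 0 := sub_ne_zero.2 hD₁
  set s := {ρ : ℝ | 0 < 1 + (D - 1) * ρ}
  have hinv : StrictConcaveOn ℝ s fun ρ => K * D ^ 2 / (D - 1) ^ 2 * -(1 + (D - 1) * ρ)⁻¹ :=
    (strictConvexOn_inv_affine hD').neg.const_mul (by positivity)
  have haffine : ConcaveOn ℝ s fun ρ =>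
      (-1 - K / (D - 1)) * ρ + (1 + K * (2 * D - 1) / (D - 1) ^ 2) :=
    ((LinearMap.mul ℝ ℝ (-1 - K / (D - 1))).concaveOn hinv.1).add_const _
  refine (haffine.add_strictConcaveOn hinv).congr fun ρ hρ => ?_
  simp only [Pi.add_apply]
  rw [mul_div_assoc K ((1 - ρ) ^ 2), one_sub_sq_div_one_add_mul_eq hD₁ (ne_of_gt hρ)]
  field_simp
  ring

/-- `h(ρ) = (1−ρ) − K(1−ρ)²/(1+(D−1)ρ)` is strictly concave on `(0,1)`, hence the
approximate TS-EH throughput `(R_s/2)·h(ρ)` is strictly concave on `(0,1)`. -/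
theorem ts_eh_throughput_strictly_concave
    (K D : ℝ) (hK : 0 < K) (hD : 1 < D) :
    StrictConcaveOn ℝ (Set.Ioo (0 : ℝ) 1)
      (fun ρ => (1 - ρ) - K * (1 - ρ) ^ 2 / (1 + (D - 1) * ρ)) ∧
    ∀ Rs : ℝ, 0 < Rs → StrictConcaveOn ℝ (Set.Ioo (0 : ℝ) 1)
      (fun ρ => Rs / 2 * ((1 - ρ) - K * (1 - ρ) ^ 2 / (1 + (D - 1) * ρ))) := by
  have hconcave := (strictConcaveOn_one_sub_sub_mul_sq_div hK (zero_lt_one.trans hD).ne' hD.ne').subset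
    (fun ρ hρ => show 0 < 1 + (D - 1) * ρ by nlinarith [hρ.1])
    (convex_Ioo 0 1)
  exact ⟨hconcave, fun Rs hRs => hconcave.const_mul (half_pos hRs)⟩
end

section
/- Let 0 < K < 1 and D > 1, and suppose D·√(K/(D−1+K)) > 1. Then the strictly concave function h(ρ) = (1−ρ) − K·(1−ρ)²/(1 + (D−1)ρ) attains its unique global maximum on (0,1) at ρ*_ts = (D·√(K/(D−1+K)) − 1)/(D−1), which is the unique solution in (0,1) of the stationarity equation K·(D² − u²) = (D−1)·u² with u = 1 + (D−1)ρ. (This gives the throughput-optimal time-switching fraction of the paper's Lemma 3, TS-EH case, for L = 1, in exact form for the approximate throughput.) -/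
/-!
If `ρ₀` satisfies `(D - 1 + K) (1 + (D - 1) ρ₀)² = K D²`, completing the square gives
`h ρ₀ - h ρ = (D - 1 + K) (ρ - ρ₀)² / (1 + (D - 1) ρ)`, which is positive for `ρ ≠ ρ₀` as long as
`1 + (D - 1) ρ > 0`. The point `ρ*` satisfies this relation because `1 + (D - 1) ρ* = D √(K / (D - 1 + K))`,
and the stationarity equation in `u = 1 + (D - 1) ρ` is the same relation, whose positive root is unique.
-/

open Real Set

noncomputable def tsThroughputFactor (K D ρ : ℝ) : ℝ :=
  (1 - ρ) - K * (1 - ρ) ^ 2 / (1 + (D - 1) * ρ)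

section

variable {K D : ℝ}

theorem tsThroughputFactor_mul {ρ : ℝ} (hu : 1 + (D - 1) * ρ ≠ 0) :
    tsThroughputFactor K D ρ * (1 + (D - 1) * ρ) =
      (1 - ρ) * (1 + (D - 1) * ρ) - K * (1 - ρ) ^ 2 := by
  rw [tsThroughputFactor, sub_mul, div_mul_cancel₀ _ hu]

theorem tsThroughputFactor_sub_eq {ρ ρ₀ : ℝ} (hD : D ≠ 1) (hu : 1 + (D - 1) * ρ ≠ 0)
    (hu₀ : 1 + (D - 1) * ρ₀ ≠ 0) (hstat : (D - 1 + K) * (1 + (D - 1) * ρ₀) ^ 2 = K * D ^ 2) :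
    tsThroughputFactor K D ρ₀ - tsThroughputFactor K D ρ =
      (D - 1 + K) * (ρ - ρ₀) ^ 2 / (1 + (D - 1) * ρ) := by
  rw [eq_div_iff hu]
  refine mul_left_cancel₀ (mul_ne_zero (sub_ne_zero.mpr hD) hu₀) ?_
  linear_combination (D - 1) * (1 + (D - 1) * ρ) * tsThroughputFactor_mul (K := K) hu₀
    - (D - 1) * (1 + (D - 1) * ρ₀) * tsThroughputFactor_mul (K := K) hu + (ρ - ρ₀) * hstat

theorem tsThroughputFactor_lt_of_ne {ρ ρ₀ : ℝ} (hD : D ≠ 1) (hE : 0 < D - 1 + K)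
    (hu : 0 < 1 + (D - 1) * ρ) (hu₀ : 0 < 1 + (D - 1) * ρ₀)
    (hstat : (D - 1 + K) * (1 + (D - 1) * ρ₀) ^ 2 = K * D ^ 2) (hne : ρ ≠ ρ₀) :
    tsThroughputFactor K D ρ < tsThroughputFactor K D ρ₀ := by
  have hgap := tsThroughputFactor_sub_eq hD hu.ne' hu₀.ne' hstat
  have hpos : 0 < (D - 1 + K) * (ρ - ρ₀) ^ 2 / (1 + (D - 1) * ρ) := by
    have := sub_ne_zero.mpr hne
    positivity
  linarith

theorem stationary_iff_eq {u v : ℝ} (hE : 0 < D - 1 + K) (hu : 0 ≤ u) (hv : 0 ≤ v)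
    (hstat : (D - 1 + K) * v ^ 2 = K * D ^ 2) :
    K * (D ^ 2 - u ^ 2) = (D - 1) * u ^ 2 ↔ u = v := by
  rw [← sq_eq_sq₀ hu hv]
  constructor
  · intro h
    exact mul_left_cancel₀ hE.ne' (by linear_combination -h - hstat)
  · intro h
    linear_combination -(D - 1 + K) * h - hstat

theorem sq_mul_sqrt_div (hK : 0 < K) (hE : 0 < D - 1 + K) :
    (D - 1 + K) * (D * √(K / (D - 1 + K))) ^ 2 = K * D ^ 2 := by
  rw [mul_pow, sq_sqrt (div_pos hK hE).le]
  field_simp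

theorem mul_sqrt_div_lt_self (hK : 0 < K) (hD : 1 < D) : D * √(K / (D - 1 + K)) < D := by
  have hfrac : K / (D - 1 + K) < 1 := (div_lt_one (by linarith)).mpr (by linarith)
  calc D * √(K / (D - 1 + K)) < D * 1 :=
        mul_lt_mul_of_pos_left ((sqrt_lt' one_pos).mpr (by simpa using hfrac)) (by linarith)
    _ = D := mul_one D

end

theorem ts_eh_optimal_time_switching_fraction_general
    (K D : ℝ) (hK0 : 0 < K) (hD : 1 < D)
    (hcond : 1 < D * Real.sqrt (K / (D - 1 + K)))
    (ρstar : ℝ)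
    (hρ : ρstar = (D * Real.sqrt (K / (D - 1 + K)) - 1) / (D - 1)) :
    ρstar ∈ Set.Ioo (0 : ℝ) 1 ∧
    (∀ ρ ∈ Set.Ioo (0 : ℝ) 1, ρ ≠ ρstar →
      (1 - ρ) - K * (1 - ρ) ^ 2 / (1 + (D - 1) * ρ) <
        (1 - ρstar) - K * (1 - ρstar) ^ 2 / (1 + (D - 1) * ρstar)) ∧
    (∀ ρ ∈ Set.Ioo (0 : ℝ) 1,
      (K * (D ^ 2 - (1 + (D - 1) * ρ) ^ 2) = (D - 1) * (1 + (D - 1) * ρ) ^ 2 ↔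
        ρ = ρstar)) := by
  set v := D * √(K / (D - 1 + K))
  have hD1 : 0 < D - 1 := by linarith
  have hE : 0 < D - 1 + K := by linarith
  have hvstat : (D - 1 + K) * v ^ 2 = K * D ^ 2 := sq_mul_sqrt_div hK0 hE
  have hvD : v < D := mul_sqrt_div_lt_self hK0 hD
  have hρv : 1 + (D - 1) * ρstar = v := by
    rw [hρ]
    field_simp
    ring
  have hu : ∀ ρ ∈ Ioo (0 : ℝ) 1, 0 < 1 + (D - 1) * ρ := fun _ hmem =>
    add_pos one_pos (mul_pos hD1 hmem.1)
  refine ⟨⟨?_, ?_⟩, fun ρ hρ' hne => ?_, fun ρ hρ' => ?_⟩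
  · rw [hρ]
    exact div_pos (by linarith) hD1
  · rw [hρ, div_lt_one hD1]
    linarith
  · exact tsThroughputFactor_lt_of_ne hD.ne' hE (hu ρ hρ') (by linarith) (hρv ▸ hvstat) hne
  · rw [stationary_iff_eq hE (hu ρ hρ').le (by linarith) hvstat, ← hρv, add_right_inj,
      mul_right_inj' hD1.ne']

/-- The strictly concave function `h(ρ) = (1−ρ) − K(1−ρ)²/(1+(D−1)ρ)` attains its
unique global maximum on `(0,1)` at `ρ*_ts = (D√(K/(D−1+K)) − 1)/(D−1)`, which is the
unique solution in `(0,1)` of `K(D² − u²) = (D−1)u²` with `u = 1 + (D−1)ρ`. -/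
theorem ts_eh_optimal_time_switching_fraction
    (K D : ℝ) (hK0 : 0 < K) (hK1 : K < 1) (hD : 1 < D)
    (hcond : 1 < D * Real.sqrt (K / (D - 1 + K)))
    (ρstar : ℝ)
    (hρ : ρstar = (D * Real.sqrt (K / (D - 1 + K)) - 1) / (D - 1)) :
    ρstar ∈ Set.Ioo (0 : ℝ) 1 ∧
    (∀ ρ ∈ Set.Ioo (0 : ℝ) 1, ρ ≠ ρstar →
      (1 - ρ) - K * (1 - ρ) ^ 2 / (1 + (D - 1) * ρ) <
        (1 - ρstar) - K * (1 - ρstar) ^ 2 / (1 + (D - 1) * ρstar)) ∧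
    (∀ ρ ∈ Set.Ioo (0 : ℝ) 1,
      (K * (D ^ 2 - (1 + (D - 1) * ρ) ^ 2) = (D - 1) * (1 + (D - 1) * ρ) ^ 2 ↔
        ρ = ρstar)) :=
  ts_eh_optimal_time_switching_fraction_general K D hK0 hD hcond ρstar hρ
end

section
/- Let 0 < K < 1, D > 1, and c > 0, and suppose D·√(K/((1+c)(D−1)+K)) > 1. Then the strictly concave function H(ρ) = (1+c)·(1−ρ) − K·(1−ρ)²/(1 + (D−1)ρ) attains its unique global maximum on (0,1) at ρ*_{in-ts} = (D·√(K/((1+c)(D−1)+K)) − 1)/(D−1). Moreover ρ*_{in-ts} < ρ*_ts = (D·√(K/(D−1+K)) − 1)/(D−1), i.e. the optimal time-switching fraction with incremental relaying is strictly smaller than without it. (This is the throughput-optimal EH parameter of the paper's Lemma for incremental relaying with TS-EH and L = 1, in exact form for the approximate throughput.) -/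
open Real Set

/-!
With `A = B(D-1) + K` and `t = 1 + (D-1)ρ`, the objective `B(1-ρ) - K(1-ρ)²/t` equals a constant
minus `(A t + K D²/t)/(D-1)²`, which is minimised in `t > 0` at `t* = D √(K/A)`, i.e. where
`A t*² = K D²`; there the gap to the optimum is exactly `A (ρ - ρ*)²/t`. With `B = 1 + c` the
optimal fraction depends on `c` only through `A`, and it decreases as `A` grows.
-/

noncomputable def tsObjective (B K D ρ : ℝ) : ℝ :=
  B * (1 - ρ) - K * (1 - ρ) ^ 2 / (1 + (D - 1) * ρ)

noncomputable def optimalFraction (K D A : ℝ) : ℝ :=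
  (D * √(K / A) - 1) / (D - 1)

theorem tsObjective_sub_tsObjective {B K D ρ ρ₀ : ℝ} (hD : D ≠ 1)
    (hρ : 1 + (D - 1) * ρ ≠ 0) (hρ₀ : 1 + (D - 1) * ρ₀ ≠ 0)
    (hstat : (B * (D - 1) + K) * (1 + (D - 1) * ρ₀) ^ 2 = K * D ^ 2) :
    tsObjective B K D ρ₀ - tsObjective B K D ρ =
      (B * (D - 1) + K) * (ρ - ρ₀) ^ 2 / (1 + (D - 1) * ρ) := by
  have hD' : D - 1 ≠ 0 := sub_ne_zero.mpr hD
  have hρ₀' : 1 + ρ₀ * (D - 1) ≠ 0 := by rwa [mul_comm]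
  unfold tsObjective
  field_simp
  refine mul_left_cancel₀ hD' ?_
  linear_combination (ρ - ρ₀) * hstat

theorem one_add_mul_optimalFraction {K D A : ℝ} (hD : D ≠ 1) :
    1 + (D - 1) * optimalFraction K D A = D * √(K / A) := by
  have hD' : D - 1 ≠ 0 := sub_ne_zero.mpr hD
  unfold optimalFraction
  field_simp
  ring

theorem optimalFraction_stationary {K D A : ℝ} (hD : D ≠ 1) (hK : 0 ≤ K) (hA : 0 < A) :
    A * (1 + (D - 1) * optimalFraction K D A) ^ 2 = K * D ^ 2 := by
  rw [one_add_mul_optimalFraction hD, mul_pow, sq_sqrt (by positivity)]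
  field_simp

theorem tsObjective_lt_tsObjective_optimalFraction {B K D ρ : ℝ} (hD : 1 < D) (hK : 0 < K)
    (hA : 0 < B * (D - 1) + K) (hρ : 0 ≤ ρ) (hne : ρ ≠ optimalFraction K D (B * (D - 1) + K)) :
    tsObjective B K D ρ < tsObjective B K D (optimalFraction K D (B * (D - 1) + K)) := by
  have ht : 0 < 1 + (D - 1) * ρ := by nlinarith
  have ht₀ : 0 < 1 + (D - 1) * optimalFraction K D (B * (D - 1) + K) := by
    rw [one_add_mul_optimalFraction hD.ne']
    have : 0 < D := by linarith
    positivity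
  have hgap := tsObjective_sub_tsObjective hD.ne' ht.ne' ht₀.ne'
    (optimalFraction_stationary hD.ne' hK.le hA)
  have : 0 < (B * (D - 1) + K) * (ρ - optimalFraction K D (B * (D - 1) + K)) ^ 2 /
      (1 + (D - 1) * ρ) := by
    have := sub_ne_zero.mpr hne
    positivity
  linarith

theorem optimalFraction_mem_Ioo {K D A : ℝ} (hD : 1 < D) (hK : 0 ≤ K) (hKA : K < A)
    (hcond : 1 < D * √(K / A)) : optimalFraction K D A ∈ Ioo 0 1 := by
  have hA : 0 < A := hK.trans_lt hKA
  have hs : √(K / A) < 1 := (sqrt_lt' one_pos).mpr (by rw [one_pow, div_lt_one hA]; exact hKA)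
  unfold optimalFraction
  constructor
  · exact div_pos (by linarith) (by linarith)
  · rw [div_lt_one (by linarith)]
    nlinarith

theorem optimalFraction_strictAntiOn {K D : ℝ} (hD : 1 < D) (hK : 0 < K) :
    StrictAntiOn (optimalFraction K D) (Ioi 0) := by
  intro A hA A' hA' hlt
  have : 0 < D - 1 := sub_pos.mpr hD
  have : 0 < A' := hA'
  unfold optimalFraction
  gcongr

theorem incremental_ts_eh_optimal_fraction_general
    (K D c : ℝ) (hK0 : 0 < K) (hD : 1 < D) (hc : 0 < c)
    (hcond : 1 < D * Real.sqrt (K / ((1 + c) * (D - 1) + K)))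
    (ρin ρts : ℝ)
    (hρin : ρin = (D * Real.sqrt (K / ((1 + c) * (D - 1) + K)) - 1) / (D - 1))
    (hρts : ρts = (D * Real.sqrt (K / (D - 1 + K)) - 1) / (D - 1)) :
    ρin ∈ Set.Ioo (0 : ℝ) 1 ∧
    (∀ ρ ∈ Set.Ioo (0 : ℝ) 1, ρ ≠ ρin →
      (1 + c) * (1 - ρ) - K * (1 - ρ) ^ 2 / (1 + (D - 1) * ρ) <
        (1 + c) * (1 - ρin) - K * (1 - ρin) ^ 2 / (1 + (D - 1) * ρin)) ∧
    ρin < ρts := by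
  change ρin = optimalFraction K D ((1 + c) * (D - 1) + K) at hρin
  change ρts = optimalFraction K D (D - 1 + K) at hρts
  subst hρin hρts
  have hA_ts : 0 < D - 1 + K := by linarith
  have hA_lt : D - 1 + K < (1 + c) * (D - 1) + K := by nlinarith
  refine ⟨optimalFraction_mem_Ioo hD hK0.le (by linarith) hcond,
    fun ρ hρ hne => tsObjective_lt_tsObjective_optimalFraction hD hK0 (hA_ts.trans hA_lt)
      hρ.1.le hne,
    optimalFraction_strictAntiOn hD hK0 hA_ts (hA_ts.trans hA_lt) hA_lt⟩

/-- The strictly concave incremental-relaying TS-EH objective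
`H(ρ) = (1+c)(1−ρ) − K(1−ρ)²/(1+(D−1)ρ)` attains its unique global maximum on `(0,1)`
at `ρ*_{in-ts} = (D√(K/((1+c)(D−1)+K)) − 1)/(D−1)`, and this optimal time-switching
fraction is strictly smaller than `ρ*_ts = (D√(K/(D−1+K)) − 1)/(D−1)`. -/
theorem incremental_ts_eh_optimal_fraction
    (K D c : ℝ) (hK0 : 0 < K) (hK1 : K < 1) (hD : 1 < D) (hc : 0 < c)
    (hcond : 1 < D * Real.sqrt (K / ((1 + c) * (D - 1) + K)))
    (ρin ρts : ℝ)
    (hρin : ρin = (D * Real.sqrt (K / ((1 + c) * (D - 1) + K)) - 1) / (D - 1))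
    (hρts : ρts = (D * Real.sqrt (K / (D - 1 + K)) - 1) / (D - 1)) :
    ρin ∈ Set.Ioo (0 : ℝ) 1 ∧
    (∀ ρ ∈ Set.Ioo (0 : ℝ) 1, ρ ≠ ρin →
      (1 + c) * (1 - ρ) - K * (1 - ρ) ^ 2 / (1 + (D - 1) * ρ) <
        (1 + c) * (1 - ρin) - K * (1 - ρin) ^ 2 / (1 + (D - 1) * ρin)) ∧
    ρin < ρts :=
  incremental_ts_eh_optimal_fraction_general K D c hK0 hD hc hcond ρin ρts hρin hρts
end
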